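/- For all integers n ≥ 2k ≥ 2, the number of labelled graphs on vertex set {1,…,n} that contain a dominating set of cardinality k is at least ( C(n,k) · (1−2^{−k})^{n−k} − n^{2k} · (1 − (3/2)·2^{−k})^{n−2k} ) · 2^{n(n−1)/2}. -/

import Mathlib

open Filter Topology

/-- Cop-win positions in the Cops and Robbers game with `k` cops, cops to move:
the least set of positions `(c, r)` such that `(c, r)` is a member whenever the cops
can move (each staying or moving along an edge) to some `c'` with `c' i = r` for some `i`,
or to some `c'` such that every robber move from `r` lands in a member position. -/
inductive CopsWinPos {V : Type*} (G : SimpleGraph V) {k : ℕ} : (Fin k → V) → V → Prop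
  | capture (c : Fin k → V) (r : V) (c' : Fin k → V)
      (hmove : ∀ i, c' i = c i ∨ G.Adj (c i) (c' i))
      (hc : ∃ i, c' i = r) : CopsWinPos G c r
  | advance (c : Fin k → V) (r : V) (c' : Fin k → V)
      (hmove : ∀ i, c' i = c i ∨ G.Adj (c i) (c' i))
      (h : ∀ r', r' = r ∨ G.Adj r r' → CopsWinPos G c' r') : CopsWinPos G c r

/-- `G` is `k`-cop-win: some initial cop placement wins against every robber placement. -/
def IsKCopWin {V : Type*} (G : SimpleGraph V) (k : ℕ) : Prop :=
  ∃ c : Fin k → V, ∀ r : V, (∃ i, c i = r) ∨ CopsWinPos G c r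

/-- `G` has a dominating set of cardinality `k`. -/
def HasDomSet {V : Type*} (G : SimpleGraph V) (k : ℕ) : Prop :=
  ∃ S : Finset V, S.card = k ∧ ∀ v ∉ S, ∃ u ∈ S, G.Adj u v

/-- `δ_k(G)`: minimum over `k`-element vertex sets `S` of the number of vertices
not in `S` and not adjacent to any vertex of `S`. -/
noncomputable def deltaK {V : Type*} [Fintype V] (G : SimpleGraph V) (k : ℕ) : ℕ :=
  sInf {m | ∃ S : Finset V, S.card = k ∧ {w : V | ∀ u ∈ S, w ≠ u ∧ ¬ G.Adj u w}.ncard = m}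

/-- `b` is `(k,q)`-dangerous: there is a `k`-set `A` avoiding `b` with `|N^c(A) ∩ N(b)| ≤ 2q`. -/
def Dangerous {V : Type*} [Fintype V] (G : SimpleGraph V) (k q : ℕ) (b : V) : Prop :=
  ∃ A : Finset V, A.card = k ∧ b ∉ A ∧
    {w : V | (∀ u ∈ A, w ≠ u ∧ ¬ G.Adj u w) ∧ G.Adj b w}.ncard ≤ 2 * q

/-! Let `A_S` be the set of graphs in which the `k`-set `S` is dominating. Domination by `S`
only constrains the edges between `S` and its complement: every vertex outside `S` must send an
edge to `S`. Rewiring the edges between a set `U` and its complement shows that all the patterns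
of neighbourhoods in `U` of the vertices outside `U` are equally frequent, so constraining each
of these neighbourhoods to lie in a family `t` selects the fraction `(#t / 2^|U|)^(n - |U|)` of
all `2^C(n,2)` graphs. Hence `|A_S| = (1 - 2^-k)^(n-k) 2^C(n,2)`, and for `S ≠ T` every vertex
outside `U = S ∪ T` has a neighbourhood in `U` meeting both `S` and `T`; these form a fraction
`1 + 2^-|U| - 2^(1-k) ≤ 1 - (3/2) 2^-k` of the subsets of `U`, because `|U| > k`. The Bonferroni
inequality `|⋃ A_S| ≥ Σ |A_S| - Σ_{S ≠ T} |A_S ∩ A_T|` and `C(n,k)^2 ≤ n^(2k)` conclude.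
-/

open Finset
open scoped Classical

theorem Finset.card_filter_mem_mul_card_eq {α β : Type*} [Fintype α] [DecidableEq β]
    (Φ : α → β) {T P : Finset β} (hΦ : ∀ a, Φ a ∈ T) (hPT : P ⊆ T)
    (hfiber : ∀ f ∈ T, ∀ g ∈ T, #{a | Φ a = f} = #{a | Φ a = g}) :
    #{a | Φ a ∈ P} * #T = #P * Fintype.card α := by
  have hP : #{a | Φ a ∈ P} = ∑ f ∈ P, #{a | Φ a = f} := by
    rw [card_eq_sum_card_fiberwise (s := {a | Φ a ∈ P}) (t := P)
      fun a ha => (mem_filter.mp ha).2]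
    simp only [filter_filter]
    refine sum_congr rfl fun f hf => congrArg card (filter_congr fun a _ => ?_)
    exact ⟨And.right, fun h => ⟨h ▸ hf, h⟩⟩
  rw [hP, ← card_univ, card_eq_sum_card_fiberwise (t := T) fun a _ => hΦ a, sum_mul, mul_sum]
  calc ∑ f ∈ P, #{a | Φ a = f} * #T = ∑ f ∈ P, ∑ g ∈ T, #{a | Φ a = g} :=
        sum_congr rfl fun f hf => by
          rw [mul_comm, ← smul_eq_mul, ← sum_const]
          exact sum_congr rfl fun g hg => hfiber f (hPT hf) g hg
    _ = ∑ g ∈ T, #P * #{a | Φ a = g} := by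
        rw [sum_comm]
        simp only [sum_const, smul_eq_mul]

theorem Finset.sum_card_le_card_biUnion_add {ι α : Type*} [DecidableEq ι] [DecidableEq α]
    (s : Finset ι) (A : ι → Finset α) :
    ∑ i ∈ s, #(A i) ≤ #(s.biUnion A) + ∑ p ∈ s.offDiag, #(A p.1 ∩ A p.2) := by
  induction s using Finset.induction_on with
  | empty => simp
  | insert a s ha ih =>
    have hinter : #(A a ∩ s.biUnion A) ≤ ∑ j ∈ s, #(A a ∩ A j) := by
      rw [inter_biUnion]
      exact card_biUnion_le
    have hdisj : Disjoint s.offDiag ({a} ×ˢ s) := disjoint_left.mpr fun p hp hq => by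
      simp only [mem_offDiag, mem_product, mem_singleton] at hp hq
      exact ha (hq.1 ▸ hp.1)
    have hoff : ∑ p ∈ s.offDiag, #(A p.1 ∩ A p.2) + ∑ j ∈ s, #(A a ∩ A j) ≤
        ∑ p ∈ (insert a s).offDiag, #(A p.1 ∩ A p.2) := by
      rw [offDiag_insert ha]
      calc _ = ∑ p ∈ s.offDiag ∪ {a} ×ˢ s, #(A p.1 ∩ A p.2) := by
            rw [sum_union hdisj, sum_product, sum_singleton]
        _ ≤ _ := sum_le_sum_of_subset subset_union_left
    have := card_union_add_card_inter (A a) (s.biUnion A)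
    rw [sum_insert ha, biUnion_insert]
    omega

theorem Finset.card_offDiag_powersetCard_univ_le {α : Type*} [Fintype α] [DecidableEq α]
    (k : ℕ) : #(powersetCard k (univ : Finset α)).offDiag ≤ Fintype.card α ^ (2 * k) := by
  have hK : #(powersetCard k (univ : Finset α)) ≤ Fintype.card α ^ k := by
    rw [card_powersetCard, card_univ]
    exact Nat.choose_le_pow _ k
  rw [offDiag_card, two_mul, pow_add]
  exact (Nat.sub_le _ _).trans (Nat.mul_le_mul hK hK)

theorem one_sub_three_halves_inv_two_pow_nonneg {k : ℕ} (hk : 1 ≤ k) :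
    0 ≤ 1 - 3 / 2 * ((2 : ℝ) ^ k)⁻¹ := by
  have := inv_anti₀ two_pos (le_self_pow₀ one_le_two (by omega) : (2 : ℝ) ≤ 2 ^ k)
  linarith

namespace SimpleGraph

def equivSetNonDiag (V : Type*) : SimpleGraph V ≃ Set {e : Sym2 V // ¬ e.IsDiag} where
  toFun G := {e | e.1 ∈ G.edgeSet}
  invFun s := fromEdgeSet (Subtype.val '' s)
  left_inv G := by
    ext v w
    simp only [fromEdgeSet_adj, Set.mem_image, Set.mem_ofPred_eq, Subtype.exists,
      exists_and_right, exists_eq_right, mem_edgeSet]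
    exact ⟨fun h => h.1.2, fun h => ⟨⟨by simpa using h.ne, h⟩, h.ne⟩⟩
  right_inv s := by
    ext ⟨e, he⟩
    simp [he]

theorem card_eq_two_pow_choose (V : Type*) [Fintype V] [DecidableEq V] :
    Fintype.card (SimpleGraph V) = 2 ^ (Fintype.card V).choose 2 := by
  rw [Fintype.card_congr (equivSetNonDiag V), Fintype.card_set, Sym2.card_subtype_not_diag]

section Rewiring

variable {V : Type*} {U : Finset V}

variable (U) in
def rewireCross (G : SimpleGraph V) (g : V → Finset V) : SimpleGraph V where
  Adj x y := ((x ∈ U ↔ y ∈ U) ∧ G.Adj x y) ∨ (x ∉ U ∧ y ∈ U ∧ y ∈ g x) ∨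
    (y ∉ U ∧ x ∈ U ∧ x ∈ g y)
  symm := ⟨fun x y h => by
    rcases h with ⟨hxy, h⟩ | h | h
    exacts [Or.inl ⟨hxy.symm, h.symm⟩, Or.inr (Or.inr h), Or.inr (Or.inl h)]⟩
  loopless := ⟨fun x h => by
    rcases h with ⟨-, h⟩ | ⟨hx, hx', -⟩ | ⟨hx, hx', -⟩
    exacts [G.loopless.irrefl x h, hx hx', hx hx']⟩

theorem rewireCross_adj {G : SimpleGraph V} {g : V → Finset V} {x y : V} :
    (G.rewireCross U g).Adj x y ↔ ((x ∈ U ↔ y ∈ U) ∧ G.Adj x y) ∨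
      (x ∉ U ∧ y ∈ U ∧ y ∈ g x) ∨ (y ∉ U ∧ x ∈ U ∧ x ∈ g y) :=
  Iff.rfl

theorem rewireCross_rewireCross (G : SimpleGraph V) (f g : V → Finset V) :
    (G.rewireCross U g).rewireCross U f = G.rewireCross U f := by
  ext x y
  simp only [rewireCross_adj]
  tauto

variable [DecidableEq V]

variable (U) in
noncomputable def crossNeighborFinset (G : SimpleGraph V) (v : V) : Finset V :=
  {w ∈ U | v ∉ U ∧ G.Adj v w}

theorem mem_crossNeighborFinset {G : SimpleGraph V} {v w : V} :
    w ∈ G.crossNeighborFinset U v ↔ w ∈ U ∧ v ∉ U ∧ G.Adj v w :=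
  mem_filter

theorem rewireCross_crossNeighborFinset (G : SimpleGraph V) :
    G.rewireCross U (G.crossNeighborFinset U) = G := by
  ext x y
  simp only [rewireCross_adj, mem_crossNeighborFinset]
  by_cases hx : x ∈ U <;> by_cases hy : y ∈ U <;> simp [hx, hy, G.adj_comm y x]

theorem crossNeighborFinset_of_mem {G : SimpleGraph V} {v : V} (hv : v ∈ U) :
    G.crossNeighborFinset U v = ∅ :=
  filter_false_of_mem fun _ _ h => h.1 hv

theorem crossNeighborFinset_of_notMem {G : SimpleGraph V} {v : V} (hv : v ∉ U) :
    G.crossNeighborFinset U v = {w ∈ U | G.Adj v w} :=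
  filter_congr fun _ _ => and_iff_right hv

variable [Fintype V]

variable (U) in
def crossPatterns (t : Finset (Finset V)) : Finset (V → Finset V) :=
  Fintype.piFinset fun v => if v ∈ U then {∅} else t

theorem mem_crossPatterns {t : Finset (Finset V)} {g : V → Finset V} :
    g ∈ crossPatterns U t ↔ ∀ v, (v ∈ U → g v = ∅) ∧ (v ∉ U → g v ∈ t) := by
  refine Fintype.mem_piFinset.trans (forall_congr' fun v => ?_)
  by_cases hv : v ∈ U <;> simp [hv]

theorem card_crossPatterns (t : Finset (Finset V)) :
    #(crossPatterns U t) = #t ^ (Fintype.card V - #U) := by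
  simp only [crossPatterns, Fintype.card_piFinset, apply_ite card, card_singleton]
  rw [prod_ite, prod_const_one, one_mul, prod_const, filter_not, filter_mem_eq_inter, univ_inter,
    card_sdiff_of_subset (subset_univ U), card_univ]

theorem crossPatterns_mono {t t' : Finset (Finset V)} (h : t ⊆ t') :
    crossPatterns U t ⊆ crossPatterns U t' := by
  intro g hg
  rw [mem_crossPatterns] at hg ⊢
  exact fun v => ⟨(hg v).1, fun hv => h ((hg v).2 hv)⟩

theorem crossNeighborFinset_mem_crossPatterns (G : SimpleGraph V) :
    G.crossNeighborFinset U ∈ crossPatterns U U.powerset :=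
  mem_crossPatterns.mpr fun _ => ⟨crossNeighborFinset_of_mem,
    fun _ => mem_powerset.mpr (filter_subset _ _)⟩

theorem crossNeighborFinset_rewireCross (G : SimpleGraph V) {g : V → Finset V}
    (hg : g ∈ crossPatterns U U.powerset) : (G.rewireCross U g).crossNeighborFinset U = g := by
  funext v
  ext w
  obtain ⟨hgU, hgc⟩ := mem_crossPatterns.mp hg v
  by_cases hv : v ∈ U
  · simp [mem_crossNeighborFinset, hv, hgU hv]
  · have hgvU : w ∈ g v → w ∈ U := fun h => mem_powerset.mp (hgc hv) h
    simp only [mem_crossNeighborFinset, rewireCross_adj]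
    tauto

theorem card_crossNeighborFinset_eq {f g : V → Finset V} (hf : f ∈ crossPatterns U U.powerset)
    (hg : g ∈ crossPatterns U U.powerset) :
    #{G : SimpleGraph V | G.crossNeighborFinset U = f} =
      #{G : SimpleGraph V | G.crossNeighborFinset U = g} := by
  refine card_nbij' (rewireCross U · g) (rewireCross U · f) ?_ ?_ ?_ ?_
  · intro G _
    simpa using crossNeighborFinset_rewireCross G hg
  · intro G _
    simpa using crossNeighborFinset_rewireCross G hf
  all_goals
    intro G hG
    simp only [coe_filter, mem_univ, true_and, Set.mem_ofPred_eq] at hG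
    simp only [rewireCross_rewireCross, ← hG, rewireCross_crossNeighborFinset]

theorem card_filter_adj_mem_mul {t : Finset (Finset V)} (ht : t ⊆ U.powerset) :
    #{G : SimpleGraph V | ∀ v ∉ U, {w ∈ U | G.Adj v w} ∈ t} *
        2 ^ (#U * (Fintype.card V - #U)) =
      #t ^ (Fintype.card V - #U) * 2 ^ (Fintype.card V).choose 2 := by
  have hfilter : #{G : SimpleGraph V | ∀ v ∉ U, {w ∈ U | G.Adj v w} ∈ t} =
      #{G : SimpleGraph V | G.crossNeighborFinset U ∈ crossPatterns U t} := by
    refine congrArg card (filter_congr fun G _ => ?_)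
    rw [mem_crossPatterns]
    refine ⟨fun h v => ⟨crossNeighborFinset_of_mem, fun hv => ?_⟩, fun h v hv => ?_⟩
    · exact crossNeighborFinset_of_notMem hv ▸ h v hv
    · exact crossNeighborFinset_of_notMem hv ▸ (h v).2 hv
  have := card_filter_mem_mul_card_eq (crossNeighborFinset U)
    crossNeighborFinset_mem_crossPatterns (crossPatterns_mono ht)
    fun f hf g hg => card_crossNeighborFinset_eq hf hg
  rwa [card_crossPatterns, card_crossPatterns, card_powerset, ← pow_mul,
    card_eq_two_pow_choose, ← hfilter] at this

theorem card_filter_adj_mem {t : Finset (Finset V)} (ht : t ⊆ U.powerset) :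
    (#{G : SimpleGraph V | ∀ v ∉ U, {w ∈ U | G.Adj v w} ∈ t} : ℝ) =
      2 ^ (Fintype.card V).choose 2 * (#t / 2 ^ #U) ^ (Fintype.card V - #U) := by
  have h := congrArg (Nat.cast : ℕ → ℝ) (card_filter_adj_mem_mul ht)
  push_cast at h
  rw [div_pow, ← pow_mul, mul_div_assoc', eq_div_iff (by positivity), h, mul_comm]

end Rewiring

section Domination

variable {V : Type*}

def Dominates (G : SimpleGraph V) (S : Finset V) : Prop :=
  ∀ v ∉ S, ∃ u ∈ S, G.Adj u v

variable [DecidableEq V]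

theorem dominates_iff_forall_filter_adj_mem {G : SimpleGraph V} {S : Finset V} :
    G.Dominates S ↔ ∀ v ∉ S, {w ∈ S | G.Adj v w} ∈ S.powerset.erase ∅ := by
  refine forall₂_congr fun v _ => ?_
  simp only [mem_erase, mem_powerset, filter_subset, and_true, ← nonempty_iff_ne_empty,
    filter_nonempty_iff, G.adj_comm v]

def meetBoth (S T : Finset V) : Finset (Finset V) :=
  (S ∪ T).powerset \ ((T \ S).powerset ∪ (S \ T).powerset)

theorem filter_adj_mem_meetBoth {G : SimpleGraph V} {S T : Finset V} (hS : G.Dominates S)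
    (hT : G.Dominates T) {v : V} (hv : v ∉ S ∪ T) :
    {w ∈ S ∪ T | G.Adj v w} ∈ meetBoth S T := by
  rw [mem_union, not_or] at hv
  obtain ⟨u, hu, huv⟩ := hS v hv.1
  obtain ⟨u', hu', hu'v⟩ := hT v hv.2
  rw [meetBoth, Finset.mem_sdiff, Finset.mem_union, mem_powerset, mem_powerset, mem_powerset]
  refine ⟨filter_subset _ _, not_or.mpr ⟨fun h => ?_, fun h => ?_⟩⟩
  · exact (Finset.mem_sdiff.mp (h (mem_filter.mpr ⟨mem_union_left T hu, huv.symm⟩))).2 hu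
  · exact (Finset.mem_sdiff.mp (h (mem_filter.mpr ⟨mem_union_right S hu', hu'v.symm⟩))).2 hu'

theorem card_meetBoth_add (S T : Finset V) :
    #(meetBoth S T) + 2 ^ #(T \ S) + 2 ^ #(S \ T) = 2 ^ #(S ∪ T) + 1 := by
  have hsub : (T \ S).powerset ∪ (S \ T).powerset ⊆ (S ∪ T).powerset :=
    union_subset (powerset_mono.mpr (sdiff_subset.trans subset_union_right))
      (powerset_mono.mpr (sdiff_subset.trans subset_union_left))
  have hinter : (T \ S).powerset ∩ (S \ T).powerset = {∅} := by
    ext X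
    simp only [mem_inter, mem_powerset, mem_singleton]
    refine ⟨fun ⟨h₁, h₂⟩ => eq_empty_of_forall_notMem fun x hx => ?_,
      fun h => h ▸ ⟨empty_subset _, empty_subset _⟩⟩
    exact (Finset.mem_sdiff.mp (h₁ hx)).2 (Finset.mem_sdiff.mp (h₂ hx)).1
  have := card_union_add_card_inter (T \ S).powerset (S \ T).powerset
  rw [hinter, card_singleton, card_powerset, card_powerset] at this
  rw [meetBoth, ← card_powerset (S ∪ T), ← card_sdiff_add_card_eq_card hsub]
  omega

theorem card_meetBoth_div_le {S T : Finset V} {k : ℕ} (hS : #S = k) (hT : #T = k)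
    (hST : S ≠ T) :
    (#(meetBoth S T) : ℝ) / 2 ^ #(S ∪ T) ≤ 1 - 3 / 2 * ((2 : ℝ) ^ k)⁻¹ := by
  have hTS : #(T \ S) + k = #(S ∪ T) := by rw [← hS, card_sdiff_add_card, union_comm]
  have hST' : #(S \ T) + k = #(S ∪ T) := by rw [← hT, card_sdiff_add_card]
  have hm : 1 ≤ #(T \ S) := by
    rw [Nat.one_le_iff_ne_zero, Ne, card_eq_zero, sdiff_eq_empty_iff_subset]
    exact fun h => hST (eq_of_subset_of_card_le h (hS.trans hT.symm).le).symm
  have h := congrArg (Nat.cast : ℕ → ℝ) (card_meetBoth_add S T)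
  rw [show #(S \ T) = #(T \ S) by omega, ← hTS] at h
  rw [← hTS]
  push_cast at h ⊢
  have ha : (2 : ℝ) ≤ 2 ^ #(T \ S) := le_self_pow₀ one_le_two (by omega)
  have hb : (0 : ℝ) < 2 ^ k := by positivity
  have hexp : (1 - 3 / 2 * ((2 : ℝ) ^ k)⁻¹) * (2 ^ #(T \ S) * 2 ^ k) =
      2 ^ #(T \ S) * 2 ^ k - 3 / 2 * 2 ^ #(T \ S) := by
    field_simp
  rw [pow_add] at h ⊢
  rw [div_le_iff₀ (by positivity), hexp]
  linarith

variable [Fintype V]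

theorem card_dominates (S : Finset V) :
    (#{G : SimpleGraph V | G.Dominates S} : ℝ) =
      2 ^ (Fintype.card V).choose 2 * (1 - ((2 : ℝ) ^ #S)⁻¹) ^ (Fintype.card V - #S) := by
  simp only [dominates_iff_forall_filter_adj_mem]
  rw [card_filter_adj_mem (erase_subset _ _), card_erase_of_mem (empty_mem_powerset S),
    card_powerset, Nat.cast_sub Nat.one_le_two_pow]
  push_cast
  rw [sub_div, div_self (by positivity), one_div]

theorem card_dominates_and_dominates_le {S T : Finset V} {k : ℕ} (hS : #S = k) (hT : #T = k)
    (hST : S ≠ T) :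
    (#{G : SimpleGraph V | G.Dominates S ∧ G.Dominates T} : ℝ) ≤
      2 ^ (Fintype.card V).choose 2 *
        (1 - 3 / 2 * ((2 : ℝ) ^ k)⁻¹) ^ (Fintype.card V - 2 * k) := by
  have hk : 1 ≤ k := by
    by_contra! h
    exact hST ((card_eq_zero.mp (by omega)).trans (card_eq_zero.mp (by omega)).symm)
  have hU : #(S ∪ T) ≤ 2 * k := (card_union_le S T).trans (by omega)
  have hsub : ({G | G.Dominates S ∧ G.Dominates T} : Finset (SimpleGraph V)) ⊆
      ({G | ∀ v ∉ S ∪ T, {w ∈ S ∪ T | G.Adj v w} ∈ meetBoth S T} :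
        Finset (SimpleGraph V)) := by
    intro G hG
    simp only [mem_filter, mem_univ, true_and] at hG ⊢
    exact fun v hv => filter_adj_mem_meetBoth hG.1 hG.2 hv
  calc _ ≤ _ := Nat.cast_le.mpr (card_le_card hsub)
    _ = _ := card_filter_adj_mem sdiff_subset
    _ ≤ 2 ^ (Fintype.card V).choose 2 *
          (1 - 3 / 2 * ((2 : ℝ) ^ k)⁻¹) ^ (Fintype.card V - #(S ∪ T)) := by
        gcongr
        exact card_meetBoth_div_le hS hT hST
    _ ≤ _ := mul_le_mul_of_nonneg_left (pow_le_pow_of_le_one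
        (one_sub_three_halves_inv_two_pow_nonneg hk) (by simp) (by omega)) (by positivity)

theorem sum_card_dominates (k : ℕ) :
    ∑ S ∈ powersetCard k (univ : Finset V), (#{G : SimpleGraph V | G.Dominates S} : ℝ) =
      (Fintype.card V).choose k *
        (2 ^ (Fintype.card V).choose 2 * (1 - ((2 : ℝ) ^ k)⁻¹) ^ (Fintype.card V - k)) := by
  rw [sum_congr rfl fun S hS => ?_, sum_const, card_powersetCard, card_univ, nsmul_eq_mul]
  rw [card_dominates, mem_powersetCard_univ.mp hS]

theorem sum_card_dominates_and_dominates_le {k : ℕ} (hk : 1 ≤ k) :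
    ∑ p ∈ (powersetCard k (univ : Finset V)).offDiag,
        (#{G : SimpleGraph V | G.Dominates p.1 ∧ G.Dominates p.2} : ℝ) ≤
      Fintype.card V ^ (2 * k) * (2 ^ (Fintype.card V).choose 2 *
        (1 - 3 / 2 * ((2 : ℝ) ^ k)⁻¹) ^ (Fintype.card V - 2 * k)) := by
  have hβ := one_sub_three_halves_inv_two_pow_nonneg hk
  calc _ ≤ ∑ _p ∈ (powersetCard k (univ : Finset V)).offDiag, (2 ^ (Fintype.card V).choose 2 *
          (1 - 3 / 2 * ((2 : ℝ) ^ k)⁻¹) ^ (Fintype.card V - 2 * k)) := by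
        refine sum_le_sum fun p hp => ?_
        obtain ⟨hS, hT, hST⟩ := mem_offDiag.mp hp
        exact card_dominates_and_dominates_le (mem_powersetCard_univ.mp hS)
          (mem_powersetCard_univ.mp hT) hST
    _ ≤ _ := by
        rw [sum_const, nsmul_eq_mul]
        gcongr
        exact_mod_cast card_offDiag_powersetCard_univ_le k

theorem card_exists_dominates_ge {k : ℕ} (hk : 1 ≤ k) :
    (((Fintype.card V).choose k : ℝ) * (1 - ((2 : ℝ) ^ k)⁻¹) ^ (Fintype.card V - k) -
        (Fintype.card V : ℝ) ^ (2 * k) *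
          (1 - 3 / 2 * ((2 : ℝ) ^ k)⁻¹) ^ (Fintype.card V - 2 * k)) *
        2 ^ (Fintype.card V).choose 2 ≤
      (Nat.card {G : SimpleGraph V // ∃ S : Finset V, #S = k ∧ G.Dominates S} : ℝ) := by
  set A : Finset V → Finset (SimpleGraph V) := fun S => {G | G.Dominates S}
  have hunion : #((powersetCard k univ).biUnion A) ≤
      Nat.card {G : SimpleGraph V // ∃ S : Finset V, #S = k ∧ G.Dominates S} := by
    rw [Nat.card_eq_fintype_card, Fintype.card_subtype]
    refine card_le_card fun G hG => ?_
    obtain ⟨S, hS, hG⟩ := mem_biUnion.mp hG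
    exact mem_filter.mpr ⟨mem_univ G, S, mem_powersetCard_univ.mp hS, (mem_filter.mp hG).2⟩
  have hbonf := (Nat.cast_le (α := ℝ)).mpr ((sum_card_le_card_biUnion_add
    (powersetCard k univ) A).trans (Nat.add_le_add_right hunion _))
  simp only [A, ← filter_and] at hbonf
  push_cast at hbonf
  linarith [sum_card_dominates (V := V) k, sum_card_dominates_and_dominates_le (V := V) hk]

end Domination

end SimpleGraph

theorem kDom_count_lower_general (n k : ℕ) (hk : 1 ≤ k) :
    ((n.choose k : ℝ) * (1 - 2 ^ (-(k : ℝ))) ^ (n - k) -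
        (n : ℝ) ^ (2 * k) * (1 - 3 / 2 * 2 ^ (-(k : ℝ))) ^ (n - 2 * k)) *
        2 ^ (n * (n - 1) / 2) ≤
      (Nat.card {G : SimpleGraph (Fin n) // HasDomSet G k} : ℝ) := by
  have h := SimpleGraph.card_exists_dominates_ge (V := Fin n) hk
  rw [Fintype.card_fin] at h
  rw [Real.rpow_neg zero_le_two, Real.rpow_natCast, ← Nat.choose_two_right]
  exact h

/-- Lower bound: for `n ≥ 2k`, the number of labelled graphs on `{1,…,n}` containing a
dominating set of cardinality `k` is at least
`(C(n,k) (1-2^{-k})^{n-k} - n^{2k} (1-(3/2)2^{-k})^{n-2k}) 2^{n(n-1)/2}`. -/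
theorem kDom_count_lower (n k : ℕ) (hk : 1 ≤ k) (hkn : 2 * k ≤ n) :
    ((n.choose k : ℝ) * (1 - 2 ^ (-(k : ℝ))) ^ (n - k) -
        (n : ℝ) ^ (2 * k) * (1 - 3 / 2 * 2 ^ (-(k : ℝ))) ^ (n - 2 * k)) *
        2 ^ (n * (n - 1) / 2) ≤
      (Nat.card {G : SimpleGraph (Fin n) // HasDomSet G k} : ℝ) :=
  kDom_count_lower_general n k hk
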